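/- For every x on the unit sphere S^{n-1} in R^n and every real λ, with N_λ(x) = (1 + λ(1 − 3x_n^2))^2, one has N_λ(x)^{1/2} = 1 + λ(1 − 3x_n^2) = (Γ((2n+1)/4) / (2 π^{(n-1)/2} Γ(3/4))) · ∫_{S^{n-1}} |⟨x,ξ⟩|^{1/2} · ( 1 + 7λ − (6n+3) λ ξ_n^2 ) dξ, provided |λ(1 − 3x_n^2)| < 1 so that the square root of N_λ(x) equals 1 + λ(1 − 3x_n^2). -/

import Mathlib

/-!
Integrate `|⟪x, y⟫| ^ (1/2)` and `|⟪x, y⟫| ^ (1/2) * y_n ^ 2` against the Gaussian `exp (-‖y‖²)`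
over `ℝⁿ` in two ways. In polar coordinates, a function positively homogeneous of degree `d` gives
its integral over the sphere times `Γ((n + d)/2)/2`. In an orthonormal basis containing `x` (and the
unit vector along the component of `e_n` orthogonal to `x`) the Gaussian integral factors into
one-dimensional Gamma integrals. This gives both sphere integrals in closed form, and the identity
follows: the second one is `(2 + x_n²)/(2n + 1)` times the first.
-/

open MeasureTheory Real Finset
open scoped RealInnerProductSpace

theorem integral_abs_rpow_mul_exp_neg_sq {s : ℝ} (hs : -1 < s) :
    ∫ t : ℝ, |t| ^ s * exp (-t ^ 2) = Gamma ((s + 1) / 2) := by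
  have h := integral_rpow_mul_exp_neg_rpow two_pos hs
  simp only [rpow_two] at h
  calc ∫ t : ℝ, |t| ^ s * exp (-t ^ 2) = ∫ t : ℝ, |t| ^ s * exp (-|t| ^ 2) := by
        simp only [sq_abs]
    _ = 2 * ∫ t in Set.Ioi 0, t ^ s * exp (-t ^ 2) :=
        integral_comp_abs (f := fun t => t ^ s * exp (-t ^ 2))
    _ = Gamma ((s + 1) / 2) := by rw [h]; ring

theorem integral_mul_exp_neg_sq : ∫ t : ℝ, t * exp (-t ^ 2) = 0 := by
  have h := integral_neg_eq_self (fun t : ℝ => t * exp (-t ^ 2)) volume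
  simp only [neg_sq, neg_mul, integral_neg] at h
  linarith

theorem integral_sq_mul_exp_neg_sq : ∫ t : ℝ, t ^ 2 * exp (-t ^ 2) = √π / 2 := by
  have h := integral_abs_rpow_mul_exp_neg_sq (s := 2) (by norm_num)
  rw [show ((2 : ℝ) + 1) / 2 = 1 / 2 + 1 by norm_num, Gamma_add_one (by norm_num),
    Gamma_one_half_eq] at h
  simp_rw [rpow_two, sq_abs] at h
  linarith

theorem integral_exp_neg_sq : ∫ t : ℝ, exp (-t ^ 2) = √π := by
  simpa using integral_gaussian 1

theorem sqrt_pow_eq_rpow_div_two {x : ℝ} (hx : 0 ≤ x) (m : ℕ) : √x ^ m = x ^ ((m : ℝ) / 2) := by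
  rw [sqrt_eq_rpow, ← rpow_natCast, ← rpow_mul hx]
  ring_nf

section Polar

variable {F : Type*} [NormedAddCommGroup F] [NormedSpace ℝ F] [FiniteDimensional ℝ F]
  [MeasurableSpace F] [BorelSpace F]

theorem integral_volumeIoiPow (m : ℕ) (f : ℝ → ℝ) :
    ∫ r, f r ∂Measure.volumeIoiPow m = ∫ r in Set.Ioi 0, r ^ m * f r := by
  simp only [Measure.volumeIoiPow, ENNReal.ofReal]
  rw [integral_withDensity_eq_integral_smul (measurable_subtype_coe.pow_const m).real_toNNReal,
    integral_subtype_comap measurableSet_Ioi (fun r => Real.toNNReal (r ^ m) • f r)]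
  refine setIntegral_congr_fun measurableSet_Ioi fun r hr => ?_
  rw [NNReal.smul_def, Real.coe_toNNReal _ (pow_nonneg (le_of_lt hr) _), smul_eq_mul]

theorem integral_volumeIoiPow_rpow_mul_exp_neg_sq (m : ℕ) {d : ℝ} (hd : -1 < m + d) :
    ∫ r, (r : ℝ) ^ d * exp (-(r : ℝ) ^ 2) ∂Measure.volumeIoiPow m
      = Gamma ((m + d + 1) / 2) / 2 := by
  have h := integral_rpow_mul_exp_neg_rpow two_pos hd
  simp only [rpow_two] at h
  rw [integral_volumeIoiPow m (fun r => r ^ d * exp (-r ^ 2)), div_eq_mul_one_div, mul_comm, ← h]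
  refine setIntegral_congr_fun measurableSet_Ioi fun r (hr : 0 < r) => ?_
  rw [rpow_add hr, rpow_natCast]
  ring

theorem integral_mul_exp_neg_norm_sq_of_homogeneous [Nontrivial F] (μ : Measure F)
    [μ.IsAddHaarMeasure] {G : F → ℝ} {d : ℝ} (hd : 0 < Module.finrank ℝ F + d)
    (hG : ∀ r : ℝ, 0 < r → ∀ y, G (r • y) = r ^ d * G y) :
    ∫ y, G y * exp (-‖y‖ ^ 2) ∂μ
      = (∫ ξ, G ξ ∂μ.toSphere) * (Gamma ((Module.finrank ℝ F + d) / 2) / 2) := by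
  have hpolar : ∀ z : ({0}ᶜ : Set F), G z * exp (-‖(z : F)‖ ^ 2)
      = G ((homeomorphUnitSphereProd F z).1) * (((homeomorphUnitSphereProd F z).2 : ℝ) ^ d
        * exp (-((homeomorphUnitSphereProd F z).2 : ℝ) ^ 2)) := by
    rintro ⟨z, hz⟩
    have hz' : (0 : ℝ) < ‖z‖ := norm_pos_iff.mpr hz
    simp only [homeomorphUnitSphereProd_apply_fst_coe, homeomorphUnitSphereProd_apply_snd_coe]
    have h := hG ‖z‖ hz' (‖z‖⁻¹ • z)
    rw [smul_inv_smul₀ hz'.ne'] at h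
    rw [h]
    ring
  have hN : ((Module.finrank ℝ F - 1 : ℕ) : ℝ) + 1 = Module.finrank ℝ F := by
    have := Module.finrank_pos (R := ℝ) (M := F)
    norm_cast
    omega
  calc ∫ y, G y * exp (-‖y‖ ^ 2) ∂μ
      = ∫ z : ({0}ᶜ : Set F), G z * exp (-‖(z : F)‖ ^ 2) ∂μ.comap (↑) := by
        rw [integral_subtype_comap (measurableSet_singleton 0).compl
          (fun y => G y * exp (-‖y‖ ^ 2)), restrict_compl_singleton]
    _ = ∫ p, G p.1 * ((p.2 : ℝ) ^ d * exp (-(p.2 : ℝ) ^ 2))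
          ∂μ.toSphere.prod (Measure.volumeIoiPow (Module.finrank ℝ F - 1)) := by
        simp only [hpolar]
        exact μ.measurePreserving_homeomorphUnitSphereProd.integral_comp
          (Homeomorph.measurableEmbedding _)
          (fun p => G p.1 * ((p.2 : ℝ) ^ d * exp (-(p.2 : ℝ) ^ 2)))
    _ = _ := by
        rw [integral_prod_mul (fun ξ : Metric.sphere (0 : F) 1 => G ξ)
          (fun r : Set.Ioi (0 : ℝ) => (r : ℝ) ^ d * exp (-(r : ℝ) ^ 2)),
          integral_volumeIoiPow_rpow_mul_exp_neg_sq _ (by linarith), add_right_comm, hN]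

theorem Continuous.integrable_toSphere (μ : Measure F) [μ.IsAddHaarMeasure]
    {g : Metric.sphere (0 : F) 1 → ℝ} (hg : Continuous g) : Integrable g μ.toSphere :=
  hg.integrable_of_hasCompactSupport (.of_compactSpace g)

end Polar

section InnerProductSpace

variable {E : Type*} [NormedAddCommGroup E] [InnerProductSpace ℝ E]

theorem abs_inner_smul_right_rpow (u y : E) {r : ℝ} (hr : 0 < r) (s : ℝ) :
    |⟪u, r • y⟫| ^ s = r ^ s * |⟪u, y⟫| ^ s := by
  rw [real_inner_smul_right, abs_mul, abs_of_pos hr, mul_rpow hr.le (abs_nonneg _)]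

theorem exists_norm_eq_one_inner_eq_zero_eq_norm_smul {u w : E} (huw : ⟪u, w⟫ = 0)
    (hw : w ≠ 0) : ∃ e : E, ‖e‖ = 1 ∧ ⟪u, e⟫ = 0 ∧ w = ‖w‖ • e := by
  refine ⟨‖w‖⁻¹ • w, norm_smul_inv_norm hw, ?_, ?_⟩
  · rw [real_inner_smul_right, huw, mul_zero]
  · rw [smul_smul, mul_inv_cancel₀ (norm_ne_zero_iff.mpr hw), one_smul]

theorem two_le_finrank_of_orthonormal_pair [FiniteDimensional ℝ E] {u e : E} (hu : ‖u‖ = 1)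
    (he : ‖e‖ = 1) (hue : ⟪u, e⟫ = 0) : 2 ≤ Module.finrank ℝ E := by
  have h : Orthonormal ℝ ![u, e] := by
    rw [orthonormal_iff_ite]
    simp [Fin.forall_fin_two, hu, he, hue, real_inner_comm u e]
  simpa using h.linearIndependent.fintype_card_le_finrank

variable [FiniteDimensional ℝ E] [MeasurableSpace E] [BorelSpace E]

theorem OrthonormalBasis.integral_prod_inner_mul_exp_neg_norm_sq {ι : Type*} [Fintype ι]
    (b : OrthonormalBasis ι ℝ E) (f : ι → ℝ → ℝ) :
    ∫ y, (∏ i, f i ⟪b i, y⟫) * exp (-‖y‖ ^ 2) = ∏ i, ∫ t, f i t * exp (-t ^ 2) := by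
  set g : (ι → ℝ) → ℝ := fun z => ∏ i, f i (z i) * exp (-z i ^ 2)
  have hprod : ∀ y : E, (∏ i, f i ⟪b i, y⟫) * exp (-‖y‖ ^ 2) = g (b.repr y).ofLp := by
    intro y
    simp only [g, b.repr_apply_apply, prod_mul_distrib, ← b.sum_sq_inner_right y,
      ← sum_neg_distrib, exp_sum]
  simp_rw [hprod]
  rw [b.measurePreserving_repr.integral_comp b.repr.toHomeomorph.measurableEmbedding
      (fun z => g z.ofLp),
    (PiLp.volume_preserving_ofLp ι).integral_comp
      (MeasurableEquiv.toLp 2 (ι → ℝ)).symm.measurableEmbedding g]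
  exact integral_fintype_prod_volume_eq_prod (fun i t => f i t * exp (-t ^ 2))

theorem OrthonormalBasis.integral_prod_finset_inner_mul_exp_neg_norm_sq {ι : Type*} [Fintype ι]
    [DecidableEq ι] (b : OrthonormalBasis ι ℝ E) (s : Finset ι) (f : ι → ℝ → ℝ) :
    ∫ y, (∏ i ∈ s, f i ⟪b i, y⟫) * exp (-‖y‖ ^ 2)
      = (∏ i ∈ s, ∫ t, f i t * exp (-t ^ 2)) * √π ^ (Fintype.card ι - #s) := by
  have h := b.integral_prod_inner_mul_exp_neg_norm_sq
    (fun i => if i ∈ s then f i else fun _ => 1)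
  simp only [ite_apply, prod_ite_mem, univ_inter] at h
  rw [h, ← prod_mul_prod_compl s, ← card_compl, ← prod_const]
  congr 1
  · exact prod_congr rfl fun i hi => by simp only [if_pos hi]
  · refine prod_congr rfl fun i hi => ?_
    simpa [if_neg (mem_compl.mp hi)] using integral_exp_neg_sq

theorem integral_comp_inner_mul_exp_neg_norm_sq {u : E} (hu : ‖u‖ = 1) (f : ℝ → ℝ) :
    ∫ y, f ⟪u, y⟫ * exp (-‖y‖ ^ 2)
      = (∫ t, f t * exp (-t ^ 2)) * √π ^ (Module.finrank ℝ E - 1) := by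
  have hv : Orthonormal ℝ ((↑) : ({u} : Set E) → E) := by
    refine ⟨fun i => by rw [show (i : E) = u from i.2]; exact hu, fun i j hij => ?_⟩
    exact absurd (Subtype.ext (i.2.trans j.2.symm)) hij
  obtain ⟨s, b, hus, hb⟩ := hv.exists_orthonormalBasis_extension
  classical
  have h := b.integral_prod_finset_inner_mul_exp_neg_norm_sq {⟨u, hus rfl⟩} (fun _ => f)
  simpa [hb, Module.finrank_eq_card_basis b.toBasis] using h

theorem integral_comp_inner_mul_comp_inner_mul_exp_neg_norm_sq {u e : E} (hu : ‖u‖ = 1)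
    (he : ‖e‖ = 1) (hue : ⟪u, e⟫ = 0) (f g : ℝ → ℝ) :
    ∫ y, f ⟪u, y⟫ * g ⟪e, y⟫ * exp (-‖y‖ ^ 2)
      = (∫ t, f t * exp (-t ^ 2)) * (∫ t, g t * exp (-t ^ 2))
        * √π ^ (Module.finrank ℝ E - 2) := by
  have hne : u ≠ e := by
    rintro rfl
    rw [real_inner_self_eq_norm_sq, hu] at hue
    norm_num at hue
  have hv : Orthonormal ℝ ((↑) : ({u, e} : Set E) → E) := by
    refine ⟨?_, ?_⟩
    · rintro ⟨i, rfl | rfl⟩ <;> assumption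
    · rintro ⟨i, rfl | rfl⟩ ⟨j, rfl | rfl⟩ hij <;> simp_all [real_inner_comm]
  obtain ⟨s, b, hus, hb⟩ := hv.exists_orthonormalBasis_extension
  classical
  have hne' : (⟨u, hus (by simp)⟩ : s) ≠ ⟨e, hus (by simp)⟩ :=
    fun h => hne (congrArg Subtype.val h)
  have h := b.integral_prod_finset_inner_mul_exp_neg_norm_sq
    {⟨u, hus (by simp)⟩, ⟨e, hus (by simp)⟩} (fun i => if (i : E) = u then f else g)
  simp only [prod_pair hne', hb, if_pos, if_neg hne.symm, card_pair hne'] at h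
  rw [← Module.finrank_eq_card_basis b.toBasis] at h
  simpa [mul_assoc] using h

theorem integral_abs_inner_rpow_mul_inner_mul_self_mul_exp_neg_norm_sq {u : E} (hu : ‖u‖ = 1)
    {s : ℝ} (hs : -1 < s) :
    ∫ y, |⟪u, y⟫| ^ s * (⟪u, y⟫ * ⟪u, y⟫) * exp (-‖y‖ ^ 2)
      = (s + 1) / 2 * Gamma ((s + 1) / 2) * √π ^ (Module.finrank ℝ E - 1) := by
  have hpow (t : ℝ) : |t| ^ s * (t * t) = |t| ^ (s + 2) := by
    rw [rpow_add' (abs_nonneg t) (by linarith), rpow_two, sq_abs, sq]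
  rw [integral_comp_inner_mul_exp_neg_norm_sq hu (fun t => |t| ^ s * (t * t))]
  simp only [hpow]
  rw [integral_abs_rpow_mul_exp_neg_sq (by linarith), ← Gamma_add_one (by linarith)]
  ring_nf

theorem integral_abs_inner_rpow_mul_inner_mul_inner_mul_exp_neg_norm_sq_of_inner_eq_zero
    {u w : E} (hu : ‖u‖ = 1) (huw : ⟪u, w⟫ = 0) (s : ℝ) :
    ∫ y, |⟪u, y⟫| ^ s * (⟪u, y⟫ * ⟪w, y⟫) * exp (-‖y‖ ^ 2) = 0 := by
  rcases eq_or_ne w 0 with rfl | hw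
  · simp
  obtain ⟨e, he, hue, hwe⟩ := exists_norm_eq_one_inner_eq_zero_eq_norm_smul huw hw
  have h := integral_comp_inner_mul_comp_inner_mul_exp_neg_norm_sq hu he hue
    (fun t => |t| ^ s * t) id
  simp only [id, integral_mul_exp_neg_sq, mul_zero, zero_mul] at h
  conv_lhs => rw [hwe]
  calc _ = ‖w‖ * ∫ y, |⟪u, y⟫| ^ s * ⟪u, y⟫ * ⟪e, y⟫ * exp (-‖y‖ ^ 2) := by
        rw [← integral_const_mul]; congr 1; ext y; rw [real_inner_smul_left]; ring
    _ = 0 := by rw [h, mul_zero]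

theorem integral_abs_inner_rpow_mul_inner_mul_self_mul_exp_neg_norm_sq_of_inner_eq_zero
    {u w : E} (hu : ‖u‖ = 1) (huw : ⟪u, w⟫ = 0) {s : ℝ} (hs : -1 < s) :
    ∫ y, |⟪u, y⟫| ^ s * (⟪w, y⟫ * ⟪w, y⟫) * exp (-‖y‖ ^ 2)
      = ‖w‖ ^ 2 * Gamma ((s + 1) / 2) * √π ^ (Module.finrank ℝ E - 1) / 2 := by
  rcases eq_or_ne w 0 with rfl | hw
  · simp
  obtain ⟨e, he, hue, hwe⟩ := exists_norm_eq_one_inner_eq_zero_eq_norm_smul huw hw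
  have hdim := two_le_finrank_of_orthonormal_pair hu he hue
  have h := integral_comp_inner_mul_comp_inner_mul_exp_neg_norm_sq hu he hue
    (fun t => |t| ^ s) (fun t => t * t)
  simp only [← sq, integral_sq_mul_exp_neg_sq, integral_abs_rpow_mul_exp_neg_sq hs] at h
  conv_lhs => rw [hwe]
  calc _ = ‖w‖ ^ 2 * ∫ y, |⟪u, y⟫| ^ s * ⟪e, y⟫ ^ 2 * exp (-‖y‖ ^ 2) := by
        rw [← integral_const_mul]; congr 1; ext y; rw [real_inner_smul_left]; ring
    _ = _ := by
      rw [h, show Module.finrank ℝ E - 1 = Module.finrank ℝ E - 2 + 1 by omega, pow_succ]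
      ring

theorem integral_sphere_abs_inner_rpow {u : E} (hu : ‖u‖ = 1) {s : ℝ} (hs : -1 < s) :
    ∫ ξ : Metric.sphere (0 : E) 1, |⟪u, ξ⟫| ^ s ∂(volume : Measure E).toSphere
      = 2 * Gamma ((s + 1) / 2) * √π ^ (Module.finrank ℝ E - 1)
        / Gamma ((Module.finrank ℝ E + s) / 2) := by
  have : Nontrivial E := ⟨u, 0, by rintro rfl; simp at hu⟩
  have hdim : (1 : ℝ) ≤ Module.finrank ℝ E := by
    exact_mod_cast Module.finrank_pos (R := ℝ) (M := E)
  have hpolar := integral_mul_exp_neg_norm_sq_of_homogeneous (volume : Measure E)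
    (G := fun y => |⟪u, y⟫| ^ s) (by linarith) fun r hr y => abs_inner_smul_right_rpow u y hr s
  rw [integral_comp_inner_mul_exp_neg_norm_sq hu (fun t => |t| ^ s),
    integral_abs_rpow_mul_exp_neg_sq hs] at hpolar
  rw [eq_div_iff (Gamma_pos_of_pos (by linarith)).ne']
  linear_combination -2 * hpolar

theorem integrable_toSphere_abs_inner_rpow_mul (u : E) {s : ℝ} (hs : 0 ≤ s)
    {g : Metric.sphere (0 : E) 1 → ℝ} (hg : Continuous g) :
    Integrable (fun ξ : Metric.sphere (0 : E) 1 => |⟪u, ξ⟫| ^ s * g ξ)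
      (volume : Measure E).toSphere :=
  (((continuous_const.inner continuous_subtype_val).abs.rpow_const fun _ => Or.inr hs).mul
    hg).integrable_toSphere volume

theorem integral_abs_inner_rpow_mul_inner_mul_inner_mul_exp_neg_norm_sq_eq_integral_sphere
    [Nontrivial E] (u v w : E) {s : ℝ} (hs : -1 < s) :
    ∫ y, |⟪u, y⟫| ^ s * (⟪v, y⟫ * ⟪w, y⟫) * exp (-‖y‖ ^ 2)
      = (∫ ξ : Metric.sphere (0 : E) 1, |⟪u, ξ⟫| ^ s * (⟪v, ξ⟫ * ⟪w, ξ⟫)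
          ∂(volume : Measure E).toSphere)
        * ((Module.finrank ℝ E + s) * Gamma ((Module.finrank ℝ E + s) / 2) / 4) := by
  have hdim : (1 : ℝ) ≤ Module.finrank ℝ E := by
    exact_mod_cast Module.finrank_pos (R := ℝ) (M := E)
  rw [integral_mul_exp_neg_norm_sq_of_homogeneous volume (d := s + 2) (by linarith)
    fun r hr y => by
      rw [abs_inner_smul_right_rpow u y hr, real_inner_smul_right, real_inner_smul_right,
        rpow_add hr, rpow_two]
      ring]
  rw [show (Module.finrank ℝ E + (s + 2)) / 2 = (Module.finrank ℝ E + s) / 2 + 1 by ring,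
    Gamma_add_one (div_pos (by linarith) two_pos).ne']
  ring

theorem integral_sphere_abs_inner_rpow_mul_inner_sq {u : E} (hu : ‖u‖ = 1) {s : ℝ} (hs : 0 ≤ s)
    (v : E) :
    ∫ ξ : Metric.sphere (0 : E) 1, |⟪u, ξ⟫| ^ s * ⟪v, ξ⟫ ^ 2 ∂(volume : Measure E).toSphere
      = 2 * Gamma ((s + 1) / 2) * √π ^ (Module.finrank ℝ E - 1) * (‖v‖ ^ 2 + s * ⟪u, v⟫ ^ 2)
        / ((Module.finrank ℝ E + s) * Gamma ((Module.finrank ℝ E + s) / 2)) := by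
  have : Nontrivial E := ⟨u, 0, by rintro rfl; simp at hu⟩
  have hdim : (1 : ℝ) ≤ Module.finrank ℝ E := by
    exact_mod_cast Module.finrank_pos (R := ℝ) (M := E)
  set H : E → E → E → ℝ := fun v w y => |⟪u, y⟫| ^ s * (⟪v, y⟫ * ⟪w, y⟫)
  have hpolar (v w : E) :=
    integral_abs_inner_rpow_mul_inner_mul_inner_mul_exp_neg_norm_sq_eq_integral_sphere u v w
      (s := s) (by linarith)
  -- Linearity is applied on the sphere, where the integrands are continuous, hence integrable.
  have hint (v w : E) :
      Integrable (fun ξ : Metric.sphere (0 : E) 1 => H v w ξ) (volume : Measure E).toSphere :=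
    integrable_toSphere_abs_inner_rpow_mul u hs (by fun_prop)
  set a := ⟪u, v⟫
  set w := v - a • u
  have huw : ⟪u, w⟫ = 0 := by simp [w, inner_sub_right, real_inner_smul_right, hu, a]
  have hw : ‖w‖ ^ 2 = ‖v‖ ^ 2 - a ^ 2 := by
    rw [norm_sub_sq_real, real_inner_smul_right, norm_smul, mul_pow, hu, real_inner_comm]
    simp [a]
    ring
  have hsplit (ξ : E) :
      |⟪u, ξ⟫| ^ s * ⟪v, ξ⟫ ^ 2 = a ^ 2 * H u u ξ + 2 * a * H u w ξ + H w w ξ := by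
    have hv : ⟪v, ξ⟫ = a * ⟪u, ξ⟫ + ⟪w, ξ⟫ := by simp [w, inner_sub_left, real_inner_smul_left]
    simp only [H, hv]
    ring
  have huu := hpolar u u
  have huw' := hpolar u w
  have hww := hpolar w w
  rw [integral_abs_inner_rpow_mul_inner_mul_self_mul_exp_neg_norm_sq hu (by linarith)] at huu
  rw [integral_abs_inner_rpow_mul_inner_mul_inner_mul_exp_neg_norm_sq_of_inner_eq_zero hu huw]
    at huw'
  rw [integral_abs_inner_rpow_mul_inner_mul_self_mul_exp_neg_norm_sq_of_inner_eq_zero hu huw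
    (by linarith), hw] at hww
  simp only [hsplit]
  have hint' : Integrable (fun ξ : Metric.sphere (0 : E) 1 => a ^ 2 * H u u ξ + 2 * a * H u w ξ)
      (volume : Measure E).toSphere := ((hint u u).const_mul _).add ((hint u w).const_mul _)
  rw [integral_add hint' (hint w w),
    integral_add ((hint u u).const_mul _) ((hint u w).const_mul _), integral_const_mul,
    integral_const_mul, eq_div_iff (mul_pos (by linarith) (Gamma_pos_of_pos (by linarith))).ne']
  linear_combination (-4 * a ^ 2) * huu + (-8 * a) * huw' + (-4) * hww

theorem integral_sphere_abs_inner_rpow_mul_sub_mul_inner_sq (u : E) {s : ℝ} (hs : 0 ≤ s) (v : E)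
    (α β : ℝ) :
    ∫ ξ : Metric.sphere (0 : E) 1, |⟪u, ξ⟫| ^ s * (α - β * ⟪v, ξ⟫ ^ 2)
        ∂(volume : Measure E).toSphere
      = α * (∫ ξ : Metric.sphere (0 : E) 1, |⟪u, ξ⟫| ^ s ∂(volume : Measure E).toSphere)
        - β * ∫ ξ : Metric.sphere (0 : E) 1, |⟪u, ξ⟫| ^ s * ⟪v, ξ⟫ ^ 2
            ∂(volume : Measure E).toSphere := by
  have h1 := integrable_toSphere_abs_inner_rpow_mul u hs (g := fun _ => 1) continuous_const
  have h2 := integrable_toSphere_abs_inner_rpow_mul u hs (g := fun ξ => ⟪v, (ξ : E)⟫ ^ 2)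
    (by fun_prop)
  simp only [mul_one] at h1
  simp only [mul_sub, mul_left_comm _ β, mul_comm _ α]
  rw [integral_sub (h1.const_mul α) (h2.const_mul β), integral_const_mul, integral_const_mul]

end InnerProductSpace

theorem stmt9 (n : ℕ) (hn : 1 ≤ n) (lam : ℝ)
    (x : EuclideanSpace ℝ (Fin n)) (hx : x ∈ Metric.sphere (0 : EuclideanSpace ℝ (Fin n)) 1)
    (hsmall : |lam * (1 - 3 * x ⟨n - 1, by omega⟩ ^ 2)| < 1) :
    ((1 + lam * (1 - 3 * x ⟨n - 1, by omega⟩ ^ 2)) ^ 2) ^ ((1 : ℝ) / 2)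
        = 1 + lam * (1 - 3 * x ⟨n - 1, by omega⟩ ^ 2) ∧
      1 + lam * (1 - 3 * x ⟨n - 1, by omega⟩ ^ 2) =
        Real.Gamma ((2 * n + 1) / 4) / (2 * Real.pi ^ ((n - 1 : ℝ) / 2) * Real.Gamma (3 / 4)) *
          ∫ ξ : Metric.sphere (0 : EuclideanSpace ℝ (Fin n)) 1,
            |⟪x, (ξ : EuclideanSpace ℝ (Fin n))⟫| ^ ((1 : ℝ) / 2) *
              (1 + 7 * lam - (6 * n + 3) * lam * (ξ : EuclideanSpace ℝ (Fin n)) ⟨n - 1, by omega⟩ ^ 2)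
            ∂(volume.toSphere) := by
  refine ⟨?_, ?_⟩
  · rw [← sqrt_eq_rpow, sqrt_sq]
    linarith [(abs_lt.mp hsmall).1]
  set k : Fin n := ⟨n - 1, by omega⟩
  set e : EuclideanSpace ℝ (Fin n) := EuclideanSpace.single k 1
  have hx1 : ‖x‖ = 1 := by simpa using hx
  have he : ‖e‖ = 1 := by simp [e]
  have hcoord (y : EuclideanSpace ℝ (Fin n)) : y k = ⟪e, y⟫ := by
    simp [e, EuclideanSpace.inner_single_left]
  have hπ : π ^ ((n - 1 : ℝ) / 2) = √π ^ (n - 1) := by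
    rw [sqrt_pow_eq_rpow_div_two pi_pos.le, Nat.cast_sub hn, Nat.cast_one]
  have hΓ : Gamma ((n + 1 / 2) / 2) = Gamma ((2 * n + 1) / 4) := by congr 1; ring
  simp only [hcoord]
  rw [integral_sphere_abs_inner_rpow_mul_sub_mul_inner_sq x (by norm_num),
    integral_sphere_abs_inner_rpow hx1 (by norm_num),
    integral_sphere_abs_inner_rpow_mul_inner_sq hx1 (by norm_num), finrank_euclideanSpace_fin,
    real_inner_comm, he, hπ, hΓ]
  norm_num
  field_simp
  ring
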